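/- Let A = [a_{ij}] ∈ C^{n×n} be a Nekrasov matrix. Then A is invertible and ‖A^{-1}‖_∞ ≤ max_{1 ≤ i ≤ n} z_i(A)/(|a_{ii}| − h_i(A)). -/
import Mathlib


open Finset

noncomputable def nekH {n : ℕ} {𝕜 : Type*} [RCLike 𝕜] (A : Matrix (Fin n) (Fin n) 𝕜) : Fin n → ℝ
  | i =>
    (∑ j : Fin n, if h : j < i then ‖A i j‖ / ‖A j j‖ * nekH A j else 0)
      + ∑ j : Fin n, if i < j then ‖A i j‖ else 0
termination_by i => i.val
decreasing_by exact h

def IsNekrasov {n : ℕ} {𝕜 : Type*} [RCLike 𝕜] (A : Matrix (Fin n) (Fin n) 𝕜) : Prop :=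
  ∀ i, nekH A i < ‖A i i‖

noncomputable def nekZ {n : ℕ} {𝕜 : Type*} [RCLike 𝕜] (A : Matrix (Fin n) (Fin n) 𝕜) : Fin n → ℝ
  | i => (∑ j : Fin n, if h : j < i then ‖A i j‖ / ‖A j j‖ * nekZ A j else 0) + 1
termination_by i => i.val
decreasing_by exact h

noncomputable def nekEta {n : ℕ} {𝕜 : Type*} [RCLike 𝕜] (M : Matrix (Fin n) (Fin n) 𝕜) : Fin n → ℝ
  | i => (∑ j : Fin n, if h : j < i then ‖M i j‖ / min ‖M j j‖ 1 * nekEta M j else 0) + 1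
termination_by i => i.val
decreasing_by exact h

noncomputable def linftyNorm {n : ℕ} {𝕜 : Type*} [RCLike 𝕜] (A : Matrix (Fin n) (Fin n) 𝕜) : ℝ :=
  ⨆ i, ∑ j, ‖A i j‖

noncomputable def rPlus {n : ℕ} (M : Matrix (Fin n) (Fin n) ℝ) (i : Fin n) : ℝ :=
  Finset.fold max 0 (fun j => M i j) (Finset.univ.erase i)

noncomputable def BPlus {n : ℕ} (M : Matrix (Fin n) (Fin n) ℝ) : Matrix (Fin n) (Fin n) ℝ :=
  Matrix.of fun i j => M i j - rPlus M i

def IsBNekrasov {n : ℕ} (M : Matrix (Fin n) (Fin n) ℝ) : Prop :=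
  IsNekrasov (BPlus M) ∧ ∀ i, 0 < BPlus M i i

def IsLCPSolution {n : ℕ} (M : Matrix (Fin n) (Fin n) ℝ) (q x : Fin n → ℝ) : Prop :=
  (∀ i, 0 ≤ x i) ∧ (∀ i, 0 ≤ (M.mulVec x + q) i) ∧ ∑ i, (M.mulVec x + q) i * x i = 0

def IsPMatrix {n : ℕ} (M : Matrix (Fin n) (Fin n) ℝ) : Prop :=
  ∀ S : Finset (Fin n), 0 < (M.submatrix (fun i : S => (i : Fin n)) (fun j : S => (j : Fin n))).det



lemma fin_strong_ind {n : ℕ} {P : Fin n → Prop}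
    (h : ∀ i : Fin n, (∀ j : Fin n, j < i → P j) → P i) : ∀ i, P i := by
  have key : ∀ k : ℕ, ∀ i : Fin n, i.val ≤ k → P i := by
    intro k
    induction k with
    | zero => intro i hi; exact h i (fun j hj => absurd (Fin.lt_def.mp hj) (by omega))
    | succ k ih =>
      intro i hi
      exact h i (fun j hj => ih j (by have := Fin.lt_def.mp hj; omega))
  exact fun i => key i.val i le_rfl

lemma nekH_nonneg {n : ℕ} (A : Matrix (Fin n) (Fin n) ℂ) : ∀ i, 0 ≤ nekH A i := by
  apply fin_strong_ind
  intro i ih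
  rw [nekH]
  apply add_nonneg
  · apply Finset.sum_nonneg; intro j _
    by_cases h : j < i
    · simp only [h, dif_pos]
      exact mul_nonneg (div_nonneg (norm_nonneg _) (norm_nonneg _)) (ih j h)
    · simp [h]
  · apply Finset.sum_nonneg; intro j _
    by_cases h : i < j <;> simp [h, norm_nonneg]

lemma nekZ_one_le {n : ℕ} (A : Matrix (Fin n) (Fin n) ℂ) : ∀ i, 1 ≤ nekZ A i := by
  apply fin_strong_ind
  intro i ih
  rw [nekZ]
  have : 0 ≤ ∑ j : Fin n, if h : j < i then ‖A i j‖ / ‖A j j‖ * nekZ A j else 0 := by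
    apply Finset.sum_nonneg; intro j _
    by_cases h : j < i
    · simp only [h, dif_pos]
      exact mul_nonneg (div_nonneg (norm_nonneg _) (norm_nonneg _))
        (le_trans zero_le_one (ih j h))
    · simp [h]
  linarith

lemma nek_diag_pos {n : ℕ} {A : Matrix (Fin n) (Fin n) ℂ} (hA : IsNekrasov A) (i : Fin n) :
    0 < ‖A i i‖ := lt_of_le_of_lt (nekH_nonneg A i) (hA i)

lemma tri_split {n : ℕ} {M : Type*} [AddCommMonoid M] (i : Fin n) (f : Fin n → M) :
    ∑ j, f j = (∑ j, if j < i then f j else 0) + f i + (∑ j, if i < j then f j else 0) := by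
  have h1 : ∀ j : Fin n, f j =
      (if j < i then f j else 0) + (if j = i then f j else 0) + (if i < j then f j else 0) := by
    intro j
    rcases lt_trichotomy j i with h | h | h
    · simp [h, h.ne, h.asymm]
    · simp [h, lt_irrefl]
    · simp [h, h.ne', h.asymm]
  calc ∑ j, f j = ∑ j, ((if j < i then f j else 0) + (if j = i then f j else 0)
        + (if i < j then f j else 0)) := Finset.sum_congr rfl (fun j _ => h1 j)
    _ = _ := by
        rw [Finset.sum_add_distrib, Finset.sum_add_distrib, Finset.sum_ite_eq' Finset.univ i f]
        simp

lemma nek_key {n : ℕ} {A : Matrix (Fin n) (Fin n) ℂ} (hA : IsNekrasov A)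
    (hne : (Finset.univ : Finset (Fin n)).Nonempty) (x : Fin n → ℂ) :
    ∀ i, ‖A i i‖ * ‖x i‖ ≤
      nekH A i * (univ.sup' hne fun j => ‖x j‖)
        + nekZ A i * (univ.sup' hne fun j => ‖A.mulVec x j‖) := by
  set M := univ.sup' hne fun j => ‖x j‖ with hM
  set Y := univ.sup' hne fun j => ‖A.mulVec x j‖ with hY
  have hMle : ∀ j, ‖x j‖ ≤ M := fun j => Finset.le_sup' (fun j => ‖x j‖) (mem_univ j)
  have hYle : ∀ j, ‖A.mulVec x j‖ ≤ Y := fun j => Finset.le_sup' (fun j => ‖A.mulVec x j‖) (mem_univ j)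
  have hM0 : 0 ≤ M := le_trans (norm_nonneg _) (hMle hne.choose)
  have hY0 : 0 ≤ Y := le_trans (norm_nonneg _) (hYle hne.choose)
  apply fin_strong_ind
  intro i ih
  -- step A : basic bound
  have hsplit := tri_split i (fun j => A i j * x j)
  have hmv : A.mulVec x i = ∑ j, A i j * x j := rfl
  have heq : A i i * x i = A.mulVec x i
      - (∑ j, if j < i then A i j * x j else 0) - (∑ j, if i < j then A i j * x j else 0) := by
    rw [hmv, hsplit]; ring
  have stepA : ‖A i i‖ * ‖x i‖ ≤ ‖A.mulVec x i‖
      + (∑ j, if j < i then ‖A i j‖ * ‖x j‖ else 0)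
      + (∑ j, if i < j then ‖A i j‖ * ‖x j‖ else 0) := by
    rw [← norm_mul, heq]
    have h1 : ‖(∑ j, if j < i then A i j * x j else 0 : ℂ)‖
        ≤ ∑ j, if j < i then ‖A i j‖ * ‖x j‖ else 0 := by
      refine le_trans (norm_sum_le _ _) (Finset.sum_le_sum fun j _ => ?_)
      by_cases h : j < i <;> simp [h, norm_mul]
    have h2 : ‖(∑ j, if i < j then A i j * x j else 0 : ℂ)‖
        ≤ ∑ j, if i < j then ‖A i j‖ * ‖x j‖ else 0 := by
      refine le_trans (norm_sum_le _ _) (Finset.sum_le_sum fun j _ => ?_)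
      by_cases h : i < j <;> simp [h, norm_mul]
    calc ‖A.mulVec x i - _ - _‖ ≤ ‖A.mulVec x i - _‖ + ‖_‖ := norm_sub_le _ _
      _ ≤ ‖A.mulVec x i‖ + ‖_‖ + ‖_‖ := by gcongr; exact norm_sub_le _ _
      _ ≤ _ := by gcongr
  -- step B: bound the two sums
  have hB1 : (∑ j, if j < i then ‖A i j‖ * ‖x j‖ else 0)
      ≤ ∑ j, if j < i then ‖A i j‖ / ‖A j j‖ * (nekH A j * M + nekZ A j * Y) else 0 := by
    refine Finset.sum_le_sum fun j _ => ?_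
    by_cases h : j < i
    · simp only [h, if_pos]
      have hd := nek_diag_pos hA j
      have hxj : ‖x j‖ ≤ (nekH A j * M + nekZ A j * Y) / ‖A j j‖ :=
        (le_div_iff₀' hd).mpr (ih j h)
      calc ‖A i j‖ * ‖x j‖ ≤ ‖A i j‖ * ((nekH A j * M + nekZ A j * Y) / ‖A j j‖) := by
            exact mul_le_mul_of_nonneg_left hxj (norm_nonneg _)
        _ = ‖A i j‖ / ‖A j j‖ * (nekH A j * M + nekZ A j * Y) := by ring
    · simp [h]
  have hB2 : (∑ j, if i < j then ‖A i j‖ * ‖x j‖ else 0)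
      ≤ (∑ j, if i < j then ‖A i j‖ else 0) * M := by
    rw [Finset.sum_mul]
    refine Finset.sum_le_sum fun j _ => ?_
    by_cases h : i < j
    · simp only [h, if_pos]
      exact mul_le_mul_of_nonneg_left (hMle j) (norm_nonneg _)
    · simp [h]
  -- step C: algebra
  have halg : (∑ j, if j < i then ‖A i j‖ / ‖A j j‖ * (nekH A j * M + nekZ A j * Y) else 0)
      = (∑ j, if j < i then ‖A i j‖ / ‖A j j‖ * nekH A j else 0) * M
        + (∑ j, if j < i then ‖A i j‖ / ‖A j j‖ * nekZ A j else 0) * Y := by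
    rw [Finset.sum_mul, Finset.sum_mul, ← Finset.sum_add_distrib]
    refine Finset.sum_congr rfl fun j _ => ?_
    by_cases h : j < i <;> simp [h] <;> ring
  rw [nekH, nekZ]
  simp only [dite_eq_ite]
  calc ‖A i i‖ * ‖x i‖ ≤ _ := stepA
    _ ≤ Y + ((∑ j, if j < i then ‖A i j‖ / ‖A j j‖ * nekH A j else 0) * M
          + (∑ j, if j < i then ‖A i j‖ / ‖A j j‖ * nekZ A j else 0) * Y)
          + (∑ j, if i < j then ‖A i j‖ else 0) * M := by
        rw [← halg]; exact add_le_add (add_le_add (hYle i) hB1) hB2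
    _ = _ := by ring

-- main vector bound
lemma nek_vec_bound {n : ℕ} {A : Matrix (Fin n) (Fin n) ℂ} (hA : IsNekrasov A)
    (hne : (Finset.univ : Finset (Fin n)).Nonempty) (x : Fin n → ℂ) (i : Fin n) :
    ‖x i‖ ≤ (univ.sup' hne fun k => nekZ A k / (‖A k k‖ - nekH A k))
      * (univ.sup' hne fun j => ‖A.mulVec x j‖) := by
  set C := univ.sup' hne fun k => nekZ A k / (‖A k k‖ - nekH A k) with hC
  set Y := univ.sup' hne fun j => ‖A.mulVec x j‖ with hYdef
  have hY0 : 0 ≤ Y := le_trans (norm_nonneg _)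
    (Finset.le_sup' (fun j => ‖A.mulVec x j‖) (mem_univ hne.choose))
  obtain ⟨i₀, _, hi₀⟩ := Finset.exists_mem_eq_sup' hne fun j => ‖x j‖
  have hkey := nek_key hA hne x i₀
  rw [← hi₀] at hkey
  have hd : 0 < ‖A i₀ i₀‖ - nekH A i₀ := sub_pos.mpr (hA i₀)
  have hM : (‖A i₀ i₀‖ - nekH A i₀) * ‖x i₀‖ ≤ nekZ A i₀ * Y := by nlinarith
  have hM2 : ‖x i₀‖ ≤ nekZ A i₀ / (‖A i₀ i₀‖ - nekH A i₀) * Y := by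
    rw [div_mul_eq_mul_div, le_div_iff₀ hd]; nlinarith
  have hle : nekZ A i₀ / (‖A i₀ i₀‖ - nekH A i₀) ≤ C :=
    Finset.le_sup' (fun k => nekZ A k / (‖A k k‖ - nekH A k)) (mem_univ i₀)
  have hxi : ‖x i‖ ≤ ‖x i₀‖ := by
    rw [← hi₀]; exact Finset.le_sup' (fun j => ‖x j‖) (mem_univ i)
  calc ‖x i‖ ≤ nekZ A i₀ / (‖A i₀ i₀‖ - nekH A i₀) * Y := le_trans hxi hM2
    _ ≤ C * Y := mul_le_mul_of_nonneg_right hle hY0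


theorem stmt7 {n : ℕ} (hn : 0 < n) (A : Matrix (Fin n) (Fin n) ℂ) (hA : IsNekrasov A) :
    IsUnit A.det ∧
      linftyNorm A⁻¹ ≤
        Finset.univ.sup' ⟨⟨0, hn⟩, Finset.mem_univ _⟩
          (fun i => nekZ A i / (‖A i i‖ - nekH A i)) := by
  have hne : (Finset.univ : Finset (Fin n)).Nonempty := ⟨⟨0, hn⟩, Finset.mem_univ _⟩
  haveI : Nonempty (Fin n) := ⟨⟨0, hn⟩⟩
  set C := univ.sup' hne fun k => nekZ A k / (‖A k k‖ - nekH A k) with hC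
  have hC0 : 0 ≤ C := by
    refine le_trans ?_ (Finset.le_sup' (fun k => nekZ A k / (‖A k k‖ - nekH A k))
      (mem_univ ⟨0, hn⟩))
    exact div_nonneg (le_trans zero_le_one (nekZ_one_le A _)) (le_of_lt (sub_pos.mpr (hA _)))
  -- invertibility
  have hdet : IsUnit A.det := by
    rw [isUnit_iff_ne_zero]
    intro h0
    obtain ⟨v, hv, hAv⟩ := Matrix.exists_mulVec_eq_zero_iff.mpr h0
    apply hv
    funext i
    have := nek_vec_bound hA hne v i
    rw [hAv] at this
    simp only [Pi.zero_apply, norm_zero] at this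
    have hs : (univ.sup' hne fun j => (0:ℝ)) = 0 := by
      simp
    rw [hs, mul_zero] at this
    exact norm_le_zero_iff.mp this
  refine ⟨hdet, ?_⟩
  rw [linftyNorm]
  apply ciSup_le
  intro i
  set u : Fin n → ℂ := fun j => if A⁻¹ i j = 0 then 0 else (‖A⁻¹ i j‖ : ℂ) / A⁻¹ i j with hu
  have hmul : A.mulVec (A⁻¹.mulVec u) = u := by
    rw [Matrix.mulVec_mulVec, Matrix.mul_nonsing_inv A hdet, Matrix.one_mulVec]
  have hx := nek_vec_bound hA hne (A⁻¹.mulVec u) i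
  rw [hmul] at hx
  have hY1 : (univ.sup' hne fun j => ‖u j‖) ≤ 1 := by
    apply Finset.sup'_le; intro j _
    by_cases h : A⁻¹ i j = 0
    · simp [hu, h]
    · simp only [hu]
      rw [if_neg h, norm_div, Complex.norm_real, Real.norm_eq_abs,
        abs_of_nonneg (norm_nonneg _), div_self (norm_ne_zero_iff.mpr h)]
  have hxi : (A⁻¹.mulVec u) i = ((∑ j, ‖A⁻¹ i j‖ : ℝ) : ℂ) := by
    simp only [Matrix.mulVec, dotProduct]
    push_cast
    refine Finset.sum_congr rfl fun j _ => ?_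
    by_cases h : A⁻¹ i j = 0
    · simp [hu, h]
    · simp only [hu]
      rw [if_neg h, mul_comm, div_mul_cancel₀ _ h]
  have hnorm : (∑ j, ‖A⁻¹ i j‖) = ‖(A⁻¹.mulVec u) i‖ := by
    rw [hxi, Complex.norm_real, Real.norm_eq_abs,
      abs_of_nonneg (Finset.sum_nonneg fun j _ => norm_nonneg _)]
  calc (∑ j, ‖A⁻¹ i j‖) = ‖(A⁻¹.mulVec u) i‖ := hnorm
    _ ≤ C * (univ.sup' hne fun j => ‖u j‖) := hx
    _ ≤ C * 1 := mul_le_mul_of_nonneg_left hY1 hC0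
    _ = C := mul_one C
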